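/- arXiv:2505.13188 — 3 statements merged into one kernel-verified Lean document; each statement's English description precedes it below -/
import Mathlib

section
/- Let p be a probability distribution on a finite set S and let f, g : S → [0, b] be two functions bounded by b ≥ 0. Then Var_p(f) ≤ 2·Var_p(g) + 2b·E_p[|f − g|], where Var_p(f) = E_p[(f − E_p f)²]. -/
/-!
The weighted mean `E_p f` minimises `c ↦ E_p[(f - c)²]`, so `Var_p(f) ≤ E_p[(f - E_p g)²]`.
Pointwise, `(f - c)² ≤ 2 (g - c)² + 2 (f - g)²`, and `(f - g)² ≤ b |f - g|` because
`|f - g| ≤ b` for functions with values in `[0, b]`; averaging over `p` gives the claim.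
-/

open Finset

theorem sum_mul_sq_sub_weightedMean_le {ι : Type*} (s : Finset ι) (p f : ι → ℝ)
    (hp1 : ∑ i ∈ s, p i = 1) (c : ℝ) :
    ∑ i ∈ s, p i * (f i - ∑ j ∈ s, p j * f j) ^ 2 ≤ ∑ i ∈ s, p i * (f i - c) ^ 2 := by
  set m := ∑ j ∈ s, p j * f j
  have gap : ∑ i ∈ s, p i * (f i - c) ^ 2 - ∑ i ∈ s, p i * (f i - m) ^ 2 = (m - c) ^ 2 := by
    have expand : ∀ i, p i * (f i - c) ^ 2 - p i * (f i - m) ^ 2 =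
        2 * (m - c) * (p i * f i) + (c ^ 2 - m ^ 2) * p i := fun i => by ring
    rw [← sum_sub_distrib]
    simp only [expand, sum_add_distrib, ← mul_sum, hp1]
    ring
  linarith [sq_nonneg (m - c)]

theorem sq_sub_le_two_mul_sq_sub_add {x y c b : ℝ} (hxy : |x - y| ≤ b) :
    (x - c) ^ 2 ≤ 2 * (y - c) ^ 2 + 2 * b * |x - y| := by
  have close : (x - y) ^ 2 ≤ b * |x - y| := by
    rw [← sq_abs, sq]
    exact mul_le_mul_of_nonneg_right hxy (abs_nonneg _)
  nlinarith [sq_nonneg (x - y - (y - c))]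

theorem variance_compare_general {S : Type*} [Fintype S]
    (p f g : S → ℝ) (b : ℝ)
    (hp : ∀ s, 0 ≤ p s) (hp1 : ∑ s, p s = 1)
    (hf : ∀ s, 0 ≤ f s ∧ f s ≤ b) (hg : ∀ s, 0 ≤ g s ∧ g s ≤ b) :
    ∑ s, p s * (f s - ∑ s', p s' * f s') ^ 2 ≤
      2 * (∑ s, p s * (g s - ∑ s', p s' * g s') ^ 2) +
        2 * b * ∑ s, p s * |f s - g s| := by
  have pointwise (s : S) :
      (f s - ∑ s', p s' * g s') ^ 2 ≤
        2 * (g s - ∑ s', p s' * g s') ^ 2 + 2 * b * |f s - g s| := by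
    refine sq_sub_le_two_mul_sq_sub_add ?_
    simpa using abs_sub_le_of_le_of_le (hf s).1 (hf s).2 (hg s).1 (hg s).2
  calc ∑ s, p s * (f s - ∑ s', p s' * f s') ^ 2
      ≤ ∑ s, p s * (f s - ∑ s', p s' * g s') ^ 2 :=
        sum_mul_sq_sub_weightedMean_le _ p f hp1 _
    _ ≤ ∑ s, p s * (2 * (g s - ∑ s', p s' * g s') ^ 2 + 2 * b * |f s - g s|) :=
        sum_le_sum fun s _ => mul_le_mul_of_nonneg_left (pointwise s) (hp s)
    _ = 2 * (∑ s, p s * (g s - ∑ s', p s' * g s') ^ 2) +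
          2 * b * ∑ s, p s * |f s - g s| := by
        simp only [mul_add, sum_add_distrib, mul_sum]
        congr 1 <;> exact sum_congr rfl fun s _ => by ring

theorem variance_compare {S : Type*} [Fintype S] [Nonempty S]
    (p f g : S → ℝ) (b : ℝ) (hb : 0 ≤ b)
    (hp : ∀ s, 0 ≤ p s) (hp1 : ∑ s, p s = 1)
    (hf : ∀ s, 0 ≤ f s ∧ f s ≤ b) (hg : ∀ s, 0 ≤ g s ∧ g s ≤ b) :
    ∑ s, p s * (f s - ∑ s', p s' * f s') ^ 2 ≤
      2 * (∑ s, p s * (g s - ∑ s', p s' * g s') ^ 2) +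
        2 * b * ∑ s, p s * |f s - g s| :=
  variance_compare_general p f g b hp hp1 hf hg
end

section
/- Let (u_t)_{t≥1} be a sequence with u_t ∈ [0,1] and let U_t = Σ_{l=1}^t u_l. Then for any T ∈ ℕ*, Σ_{t=1}^T u_{t+1} / max(U_t, 1) ≤ 4·log(U_{T+1} + 1). -/
lemma key_ineq (x v : ℝ) (hx : 0 ≤ x) (hv0 : 0 ≤ v) (hv1 : v ≤ 1) :
    v / max x 1 ≤ 4 * (Real.log (x + v + 1) - Real.log (x + 1)) := by
  have hmax : (1:ℝ) ≤ max x 1 := le_max_right _ _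
  have hmaxpos : (0:ℝ) < max x 1 := by linarith
  have hxv1 : (0:ℝ) < x + v + 1 := by linarith
  have hlog : Real.log ((x+1)/(x+v+1)) ≤ (x+1)/(x+v+1) - 1 :=
    Real.log_le_sub_one_of_pos (by positivity)
  have hlogeq : Real.log ((x+1)/(x+v+1)) = Real.log (x+1) - Real.log (x+v+1) :=
    Real.log_div (by linarith) (by linarith)
  have heq : (x+1)/(x+v+1) - 1 = -(v/(x+v+1)) := by field_simp; ring
  have h1 : v / (x+v+1) ≤ Real.log (x+v+1) - Real.log (x+1) := by
    rw [hlogeq, heq] at hlog; linarith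
  have h2 : x + v + 1 ≤ 4 * max x 1 := by
    rcases le_total x 1 with h | h
    · rw [max_eq_right h]; linarith
    · rw [max_eq_left h]; linarith
  have h3 : v / max x 1 ≤ 4 * v / (x+v+1) := by
    rw [div_le_div_iff₀ hmaxpos hxv1]
    nlinarith [mul_le_mul_of_nonneg_left h2 hv0]
  have h4 : 4 * v / (x+v+1) = 4 * (v / (x+v+1)) := by ring
  rw [h4] at h3
  linarith

theorem weighted_sum_log_bound (u : ℕ → ℝ)
    (hu : ∀ t, 1 ≤ t → 0 ≤ u t ∧ u t ≤ 1)
    (U : ℕ → ℝ) (hU : ∀ t, U t = ∑ l ∈ Finset.Icc 1 t, u l)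
    (T : ℕ) (hT : 1 ≤ T) :
    ∑ t ∈ Finset.Icc 1 T, u (t + 1) / max (U t) 1 ≤
      4 * Real.log (U (T + 1) + 1) := by
  have hUnonneg : ∀ t, 0 ≤ U t := by
    intro t
    rw [hU t]
    apply Finset.sum_nonneg
    intro l hl
    exact (hu l (Finset.mem_Icc.mp hl).1).1
  have hUsucc : ∀ t, U (t + 1) = U t + u (t + 1) := by
    intro t
    rw [hU t, hU (t+1), Finset.sum_Icc_succ_top (Nat.le_add_left 1 t)]
  clear hT
  induction T with
  | zero =>
    simp only [Finset.Icc_eq_empty_of_lt (by norm_num : (1:ℕ) > 0), Finset.sum_empty]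
    have : (0:ℝ) ≤ Real.log (U 1 + 1) :=
      Real.log_nonneg (by linarith [hUnonneg 1])
    linarith
  | succ T ih =>
    rw [Finset.sum_Icc_succ_top (Nat.le_add_left 1 T)]
    have hkey : u (T + 1 + 1) / max (U (T+1)) 1 ≤
        4 * (Real.log (U (T+1) + u (T+1+1) + 1) - Real.log (U (T+1) + 1)) :=
      key_ineq _ _ (hUnonneg (T+1)) (hu (T+1+1) (by omega)).1 (hu (T+1+1) (by omega)).2
    rw [← hUsucc (T+1)] at hkey
    linarith
end

section
/- Let (u_t)_{t≥1} be a sequence with u_t ∈ [0,1] and U_t = Σ_{l=1}^t u_l. If T + 1 ≥ 2, then Σ_{t=1}^T u_{t+1} / max(U_t, 1) ≤ 8·log(T + 1). -/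
lemma half_le_log_one_add' {x : ℝ} (h0 : 0 ≤ x) (h1 : x ≤ 1) :
    x / 2 ≤ Real.log (1 + x) := by
  rw [← Real.log_exp (x / 2)]
  apply Real.log_le_log (Real.exp_pos _)
  have h2 : 1 - x / 2 ≤ Real.exp (-(x / 2)) := by
    have := Real.add_one_le_exp (-(x / 2)); linarith
  have h3 : Real.exp (-(x / 2)) * Real.exp (x / 2) = 1 := by
    rw [← Real.exp_add]; simp
  have h4 := Real.exp_pos (x / 2)
  nlinarith [mul_le_mul_of_nonneg_right h2 h4.le, h3, h4]

lemma key_term' {a b : ℝ} (ha : 0 ≤ a) (hb0 : 0 ≤ b) (hb1 : b ≤ 1) :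
    b / max a 1 ≤ 4 * (Real.log (1 + (a + b)) - Real.log (1 + a)) := by
  have hM : (1 + a) / 2 ≤ max a 1 := by
    rcases le_total a 1 with h | h
    · rw [max_eq_right h]; linarith
    · rw [max_eq_left h]; linarith
  have h1a : (0 : ℝ) < 1 + a := by linarith
  have hx0 : 0 ≤ b / (1 + a) := div_nonneg hb0 h1a.le
  have hx1 : b / (1 + a) ≤ 1 := by rw [div_le_one h1a]; linarith
  have hlog : Real.log (1 + (a + b)) - Real.log (1 + a)
      = Real.log (1 + b / (1 + a)) := by
    rw [← Real.log_div (by linarith) (ne_of_gt h1a)]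
    congr 1
    field_simp
    ring
  rw [hlog]
  have hkey := half_le_log_one_add' hx0 hx1
  have h2 : b / max a 1 ≤ b / ((1 + a) / 2) :=
    div_le_div_of_nonneg_left hb0 (by linarith) hM
  have h3 : b / ((1 + a) / 2) = 2 * (b / (1 + a)) := by
    field_simp
  linarith [h2, hkey]

theorem weighted_sum_log_bound' (u : ℕ → ℝ)
    (hu : ∀ t, 1 ≤ t → 0 ≤ u t ∧ u t ≤ 1)
    (U : ℕ → ℝ) (hU : ∀ t, U t = ∑ l ∈ Finset.Icc 1 t, u l)
    (T : ℕ) (hT : 2 ≤ T + 1) :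
    ∑ t ∈ Finset.Icc 1 T, u (t + 1) / max (U t) 1 ≤
      8 * Real.log (T + 1) := by
  have hUnn : ∀ t, 0 ≤ U t := by
    intro t
    rw [hU]
    exact Finset.sum_nonneg fun l hl =>
      (hu l (Finset.mem_Icc.mp hl).1).1
  have hstep : ∀ t, U (t + 1) = U t + u (t + 1) := by
    intro t
    rw [hU, hU, Finset.sum_Icc_succ_top (by omega : 1 ≤ t + 1)]
  set g : ℕ → ℝ := fun t => Real.log (1 + U t) with hg
  have hterm : ∀ t ∈ Finset.Icc 1 T,
      u (t + 1) / max (U t) 1 ≤ 4 * (g (t + 1) - g t) := by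
    intro t ht
    have ht1 : 1 ≤ t + 1 := by omega
    have := key_term' (hUnn t) (hu (t + 1) ht1).1 (hu (t + 1) ht1).2
    simpa [hg, hstep t] using this
  have hsum : ∑ t ∈ Finset.Icc 1 T, u (t + 1) / max (U t) 1
      ≤ ∑ t ∈ Finset.Icc 1 T, 4 * (g (t + 1) - g t) :=
    Finset.sum_le_sum hterm
  have htel : ∑ t ∈ Finset.Icc 1 T, (g (t + 1) - g t) = g (T + 1) - g 1 := by
    rw [← Finset.Ico_add_one_right_eq_Icc, Finset.sum_Ico_eq_sum_range]
    simp only [Nat.add_sub_cancel]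
    have : ∀ i, g (1 + i + 1) - g (1 + i)
        = (fun j => g (j + 1)) (i + 1) - (fun j => g (j + 1)) i := by
      intro i; simp; ring_nf
    calc ∑ i ∈ Finset.range T, (g (1 + i + 1) - g (1 + i))
        = ∑ i ∈ Finset.range T,
          ((fun j => g (j + 1)) (i + 1) - (fun j => g (j + 1)) i) := by
          exact Finset.sum_congr rfl fun i _ => this i
      _ = g (T + 1) - g 1 := Finset.sum_range_sub (fun j => g (j + 1)) T
  have hg1 : 0 ≤ g 1 := Real.log_nonneg (by linarith [hUnn 1])
  have hUT : U (T + 1) ≤ (T : ℝ) + 1 := by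
    rw [hU]
    calc ∑ l ∈ Finset.Icc 1 (T + 1), u l
        ≤ ∑ l ∈ Finset.Icc 1 (T + 1), (1 : ℝ) :=
          Finset.sum_le_sum fun l hl => (hu l (Finset.mem_Icc.mp hl).1).2
      _ = (T : ℝ) + 1 := by
          simp [Nat.card_Icc]
  have hgT : g (T + 1) ≤ 2 * Real.log ((T : ℝ) + 1) := by
    have h1 : (1 : ℝ) ≤ (T : ℝ) := by
      have : 1 ≤ T := by omega
      exact_mod_cast this
    have hle : 1 + U (T + 1) ≤ ((T : ℝ) + 1) ^ 2 := by nlinarith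
    calc g (T + 1) ≤ Real.log (((T : ℝ) + 1) ^ 2) :=
          Real.log_le_log (by linarith [hUnn (T + 1)]) hle
      _ = 2 * Real.log ((T : ℝ) + 1) := by
          rw [Real.log_pow]; push_cast; ring
  calc ∑ t ∈ Finset.Icc 1 T, u (t + 1) / max (U t) 1
      ≤ ∑ t ∈ Finset.Icc 1 T, 4 * (g (t + 1) - g t) := hsum
    _ = 4 * (g (T + 1) - g 1) := by rw [← Finset.mul_sum, htel]
    _ ≤ 8 * Real.log ((T : ℝ) + 1) := by linarith
end
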